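/- Suppose D⁺, D⁻ : ℝ³ → ℝ³ are C¹ with bounded derivatives on the two sides of the graph of Φ, ρ_c is bounded, and for all small r, Δl the divergence identity ∫_{∂C} D · n dA = ∫_C ρ_c dx holds for the curved cylinder C of radius r and half-height Δl. Then (D⁺(0) − D⁻(0)) · n = ω, where n = (0,1,0) and ω = lim_{r→0} lim_{Δl→0} (1/(πr²)) ∫_C ρ_c dx, provided this limit exists. -/

import Mathlib

open Set Real Filter Topology intervalIntegral

noncomputable section

def dotP (a b : ℝ × ℝ × ℝ) : ℝ := a.1 * b.1 + a.2.1 * b.2.1 + a.2.2 * b.2.2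

def p1 (Φ : ℝ × ℝ → ℝ) (q : ℝ × ℝ) : ℝ := fderiv ℝ Φ q (1, 0)
def p2 (Φ : ℝ × ℝ → ℝ) (q : ℝ × ℝ) : ℝ := fderiv ℝ Φ q (0, 1)

/-- The piecewise electric induction: `Dplus` above the graph (θ,Φ(θ,η),η),
`Dminus` below. -/
def Dfield (Φ : ℝ × ℝ → ℝ) (Dplus Dminus : ℝ × ℝ × ℝ → ℝ × ℝ × ℝ)
    (p : ℝ × ℝ × ℝ) : ℝ × ℝ × ℝ :=
  if Φ (p.1, p.2.2) ≤ p.2.1 then Dplus p else Dminus p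

/-- The total outward flux ∫_{∂C} D·n dA through the boundary of the curved
cylinder C of radius r and half-height l (top + bottom + lateral surface). -/
def totalFlux (Φ : ℝ × ℝ → ℝ) (Dplus Dminus : ℝ × ℝ × ℝ → ℝ × ℝ × ℝ)
    (r l : ℝ) : ℝ :=
  (∫ α in (0:ℝ)..(2 * π), ∫ s in (0:ℝ)..r,
    s * dotP (Dfield Φ Dplus Dminus
        (s * cos α, Φ (s * cos α, s * sin α) + l, s * sin α))
      (-p1 Φ (s * cos α, s * sin α), 1, -p2 Φ (s * cos α, s * sin α))) +
  (∫ α in (0:ℝ)..(2 * π), ∫ s in (0:ℝ)..r,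
    s * dotP (Dfield Φ Dplus Dminus
        (s * cos α, Φ (s * cos α, s * sin α) - l, s * sin α))
      (p1 Φ (s * cos α, s * sin α), -1, p2 Φ (s * cos α, s * sin α))) +
  (∫ h in (-l)..l, ∫ α in (0:ℝ)..(2 * π),
    r * dotP (Dfield Φ Dplus Dminus
        (r * cos α, Φ (r * cos α, r * sin α) + h, r * sin α))
      (cos α, 0, sin α))

/-!
Split the flux through `∂C` into the two curved bases and the lateral surface. In polar
coordinates each base contributes the integral over the disk `B_r(0)` of the continuous density
`q ↦ D±(q₁, Φ q ± l, q₂) · (-∂₁Φ q, 1, -∂₂Φ q)`, whose value at `(q, l) = (0, 0)` is `D±(0)₂`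
because `∇Φ(0) = 0`; so the bases' flux divided by `πr²` converges to `D⁺(0)₂ - D⁻(0)₂` jointly
as `(r, l) → (0, 0)`. For fixed `r` the lateral flux is `O(l)`, hence `g r` is the `l`-limit of
the bases' term alone, and a joint limit passes to the iterated one.
-/

theorem tendsto_of_tendsto_prod_of_eventually_tendsto {α β γ : Type*} [TopologicalSpace γ]
    [RegularSpace γ] {la : Filter α} {lb : Filter β} [lb.NeBot] {f : α → β → γ} {g : α → γ}
    {c : γ} (hf : Tendsto (fun x : α × β => f x.1 x.2) (la ×ˢ lb) (𝓝 c))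
    (hg : ∀ᶠ a in la, Tendsto (f a) lb (𝓝 (g a))) : Tendsto g la (𝓝 c) := by
  refine (closed_nhds_basis c).tendsto_right_iff.2 fun U ⟨hU, hUc⟩ => ?_
  obtain ⟨pa, hpa, pb, hpb, hmem⟩ := eventually_prod_iff.1 (hf hU)
  filter_upwards [hpa, hg] with a ha hga
  exact hUc.mem_of_tendsto hga (hpb.mono fun b hb => hmem ha hb)

theorem tendsto_intervalIntegral_neg_self_of_norm_le {E : Type*} [NormedAddCommGroup E]
    [NormedSpace ℝ E] {H : ℝ → E} {B : ℝ} (hB : ∀ h ∈ Icc (-1 : ℝ) 1, ‖H h‖ ≤ B) :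
    Tendsto (fun l => ∫ h in (-l)..l, H h) (𝓝 0) (𝓝 0) := by
  have hlim : Tendsto (fun l : ℝ => B * |l - -l|) (𝓝 0) (𝓝 0) :=
    (by fun_prop : Continuous fun l : ℝ => B * |l - -l|).tendsto' 0 0 (by simp)
  refine squeeze_zero_norm' ?_ hlim
  filter_upwards [Icc_mem_nhds (show (-1:ℝ) < 0 by norm_num) one_pos] with l hl
  refine norm_integral_le_of_norm_le_const fun h hh => hB h ?_
  exact uIcc_subset_Icc ⟨by linarith [hl.2], by linarith [hl.1]⟩ hl (uIoc_subset_uIcc hh)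

def polarDiskIntegral (f : ℝ × ℝ → ℝ) (r : ℝ) : ℝ :=
  ∫ α in (0:ℝ)..2 * π, ∫ s in (0:ℝ)..r, s * f (s * cos α, s * sin α)

lemma norm_polar_le {s : ℝ} (hs : 0 ≤ s) (α : ℝ) : ‖(s * cos α, s * sin α)‖ ≤ s := by
  refine norm_prod_le_iff.2 ⟨?_, ?_⟩ <;>
    rw [Real.norm_eq_abs, abs_mul, abs_of_nonneg hs]
  · exact mul_le_of_le_one_right hs (abs_cos_le_one α)
  · exact mul_le_of_le_one_right hs (abs_sin_le_one α)

lemma polarDiskIntegral_sub {f g : ℝ × ℝ → ℝ} (hf : Continuous f) (hg : Continuous g) (r : ℝ) :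
    polarDiskIntegral (fun q => f q - g q) r = polarDiskIntegral f r - polarDiskIntegral g r := by
  have hpolar : ∀ {u : ℝ × ℝ → ℝ}, Continuous u →
      Continuous fun p : ℝ × ℝ => p.2 * u (p.2 * cos p.1, p.2 * sin p.1) := fun _ => by fun_prop
  have hinner : ∀ {u : ℝ × ℝ → ℝ}, Continuous u → ∀ α,
      IntervalIntegrable (fun s => s * u (s * cos α, s * sin α)) MeasureTheory.volume 0 r :=
    fun hu α => ((hpolar hu).comp (Continuous.prodMk_right α)).intervalIntegrable _ _
  have houter : ∀ {u : ℝ × ℝ → ℝ}, Continuous u → IntervalIntegrable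
      (fun α => ∫ s in (0:ℝ)..r, s * u (s * cos α, s * sin α)) MeasureTheory.volume 0 (2 * π) :=
    fun hu =>
      (continuous_parametric_intervalIntegral_of_continuous' (hpolar hu) _ _).intervalIntegrable _ _
  simp only [polarDiskIntegral, mul_sub]
  rw [← integral_sub (houter hf) (houter hg)]
  exact integral_congr fun α _ => integral_sub (hinner hf α) (hinner hg α)

lemma polarDiskIntegral_const (c r : ℝ) : polarDiskIntegral (fun _ => c) r = π * r ^ 2 * c := by
  simp only [polarDiskIntegral, integral_mul_const, integral_id, integral_const, smul_eq_mul]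
  ring

lemma abs_polarDiskIntegral_le {f : ℝ × ℝ → ℝ} {r η : ℝ} (hr : 0 ≤ r)
    (hf : ∀ q, ‖q‖ ≤ r → |f q| ≤ η) : |polarDiskIntegral f r| ≤ π * r ^ 2 * η := by
  have hinner : ∀ α, ‖∫ s in (0:ℝ)..r, s * f (s * cos α, s * sin α)‖ ≤ r ^ 2 / 2 * η := by
    intro α
    calc ‖∫ s in (0:ℝ)..r, s * f (s * cos α, s * sin α)‖ ≤ ∫ s in (0:ℝ)..r, s * η := by
          refine norm_integral_le_of_norm_le hr (MeasureTheory.ae_of_all _ fun s hs => ?_)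
            ((by fun_prop : Continuous fun s : ℝ => s * η).intervalIntegrable _ _)
          rw [norm_mul, Real.norm_of_nonneg hs.1.le]
          exact mul_le_mul_of_nonneg_left (hf _ ((norm_polar_le hs.1.le α).trans hs.2)) hs.1.le
      _ = r ^ 2 / 2 * η := by simp only [integral_mul_const, integral_id]; ring
  calc |polarDiskIntegral f r| ≤ r ^ 2 / 2 * η * |2 * π - 0| :=
        norm_integral_le_of_norm_le_const fun α _ => hinner α
    _ = π * r ^ 2 * η := by rw [sub_zero, abs_of_pos two_pi_pos]; ring

lemma tendsto_polarDiskIntegral_div {G : ℝ → ℝ × ℝ → ℝ}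
    (hG : Continuous fun p : ℝ × (ℝ × ℝ) => G p.1 p.2) :
    Tendsto (fun x : ℝ × ℝ => polarDiskIntegral (G x.2) x.1 / (π * x.1 ^ 2))
      (𝓝[>] 0 ×ˢ 𝓝 0) (𝓝 (G 0 0)) := by
  refine Metric.tendsto_nhds.2 fun η hη => ?_
  obtain ⟨δ, hδ, hG0⟩ := Metric.continuousAt_iff.1 (hG.continuousAt (x := (0, 0))) (η / 2)
    (half_pos hη)
  filter_upwards [prod_mem_prod (Ioo_mem_nhdsGT hδ) (Metric.ball_mem_nhds 0 hδ)]
    with ⟨r, ε⟩ ⟨hr, hε⟩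
  dsimp only at hr hε ⊢
  have hπr : 0 < π * r ^ 2 := by have := hr.1; positivity
  have hclose : ∀ q, ‖q‖ ≤ r → |G ε q - G 0 0| ≤ η / 2 := by
    intro q hq
    refine (Real.dist_eq _ _ ▸ hG0 (x := (ε, q)) ?_).le
    rw [Prod.dist_eq, max_lt_iff, dist_zero_right, dist_zero_right]
    exact ⟨mem_ball_zero_iff.1 hε, hq.trans_lt hr.2⟩
  have hbound := abs_polarDiskIntegral_le hr.1.le hclose
  rw [polarDiskIntegral_sub (f := G ε) (hG.comp (Continuous.prodMk_right ε)) continuous_const,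
    polarDiskIntegral_const] at hbound
  rw [Real.dist_eq, div_sub' hπr.ne', abs_div, abs_of_pos hπr, div_lt_iff₀ hπr]
  exact hbound.trans_lt (by linarith [mul_pos hπr hη])

/-- `(-∂₁Φ, 1, -∂₂Φ)` is the upward unit normal of the graph times its area element. -/
def graphFluxDensity (Φ : ℝ × ℝ → ℝ) (D : ℝ × ℝ × ℝ → ℝ × ℝ × ℝ) (ε : ℝ) (q : ℝ × ℝ) : ℝ :=
  dotP (D (q.1, Φ q + ε, q.2)) (-p1 Φ q, 1, -p2 Φ q)

def basesFlux (Φ : ℝ × ℝ → ℝ) (Dplus Dminus : ℝ × ℝ × ℝ → ℝ × ℝ × ℝ) (r l : ℝ) : ℝ :=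
  polarDiskIntegral (graphFluxDensity Φ Dplus l) r -
    polarDiskIntegral (graphFluxDensity Φ Dminus (-l)) r

def lateralFlux (Φ : ℝ × ℝ → ℝ) (Dplus Dminus : ℝ × ℝ × ℝ → ℝ × ℝ × ℝ) (r l : ℝ) : ℝ :=
  ∫ h in (-l)..l, ∫ α in (0:ℝ)..(2 * π),
    r * dotP (Dfield Φ Dplus Dminus (r * cos α, Φ (r * cos α, r * sin α) + h, r * sin α))
      (cos α, 0, sin α)

section Flux

variable {Φ : ℝ × ℝ → ℝ} {Dplus Dminus D : ℝ × ℝ × ℝ → ℝ × ℝ × ℝ}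

lemma totalFlux_eq {r l : ℝ} (hl : 0 < l) :
    totalFlux Φ Dplus Dminus r l =
      basesFlux Φ Dplus Dminus r l + lateralFlux Φ Dplus Dminus r l := by
  simp only [totalFlux, basesFlux, lateralFlux, polarDiskIntegral, sub_eq_add_neg, ← integral_neg]
  congr 2 <;> refine integral_congr fun α _ => integral_congr fun s _ => ?_ <;>
    simp only [Dfield, graphFluxDensity, dotP]
  · rw [if_pos (by linarith)]
  · rw [if_neg (by linarith)]; ring

lemma continuous_graphFluxDensity (hΦ : ContDiff ℝ 1 Φ) (hD : Continuous D) :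
    Continuous fun p : ℝ × (ℝ × ℝ) => graphFluxDensity Φ D p.1 p.2 := by
  have hΦc := hΦ.continuous
  have hdΦ := hΦ.continuous_fderiv one_ne_zero
  simp only [graphFluxDensity, dotP, p1, p2]
  fun_prop

lemma graphFluxDensity_zero (hΦ0 : Φ (0, 0) = 0) (hΦ1 : p1 Φ (0, 0) = 0)
    (hΦ2 : p2 Φ (0, 0) = 0) : graphFluxDensity Φ D 0 0 = (D (0, 0, 0)).2.1 := by
  change dotP (D (0, Φ (0, 0) + 0, 0)) (-p1 Φ (0, 0), 1, -p2 Φ (0, 0)) = _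
  simp [hΦ0, hΦ1, hΦ2, dotP]

lemma abs_comp_Dfield_le (F : ℝ × ℝ × ℝ → ℝ) (p : ℝ × ℝ × ℝ) :
    |F (Dfield Φ Dplus Dminus p)| ≤ |F (Dplus p)| + |F (Dminus p)| := by
  unfold Dfield
  split_ifs
  · exact le_add_of_nonneg_right (abs_nonneg _)
  · exact le_add_of_nonneg_left (abs_nonneg _)

lemma tendsto_basesFlux_div (hΦ : ContDiff ℝ 1 Φ) (hΦ0 : Φ (0, 0) = 0)
    (hΦ1 : p1 Φ (0, 0) = 0) (hΦ2 : p2 Φ (0, 0) = 0) (hDp : Continuous Dplus)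
    (hDm : Continuous Dminus) :
    Tendsto (fun x : ℝ × ℝ => basesFlux Φ Dplus Dminus x.1 x.2 / (π * x.1 ^ 2))
      (𝓝[>] 0 ×ˢ 𝓝[>] 0) (𝓝 ((Dplus (0, 0, 0)).2.1 - (Dminus (0, 0, 0)).2.1)) := by
  have hflip : Tendsto (fun x : ℝ × ℝ => (x.1, -x.2)) (𝓝[>] 0 ×ˢ 𝓝[>] 0) (𝓝[>] 0 ×ˢ 𝓝 0) :=
    tendsto_fst.prodMk
      (((continuous_neg.tendsto' 0 0 neg_zero).mono_left nhdsWithin_le_nhds).comp tendsto_snd)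
  have hplus := (tendsto_polarDiskIntegral_div (continuous_graphFluxDensity hΦ hDp)).mono_left
    (prod_mono le_rfl (nhdsWithin_le_nhds (s := Ioi 0)))
  have hminus := (tendsto_polarDiskIntegral_div (continuous_graphFluxDensity hΦ hDm)).comp hflip
  rw [graphFluxDensity_zero hΦ0 hΦ1 hΦ2] at hplus hminus
  simpa only [basesFlux, sub_div, Function.comp_def] using hplus.sub hminus

lemma tendsto_lateralFlux (hΦ : Continuous Φ) (hDp : Continuous Dplus) (hDm : Continuous Dminus)
    (r : ℝ) : Tendsto (lateralFlux Φ Dplus Dminus r) (𝓝 0) (𝓝 0) := by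
  set F : ℝ → ℝ × ℝ × ℝ → ℝ := fun α a => r * dotP a (cos α, 0, sin α)
  set pt : ℝ → ℝ → ℝ × ℝ × ℝ := fun h α => (r * cos α, Φ (r * cos α, r * sin α) + h, r * sin α)
  have hcont : Continuous fun x : ℝ × ℝ =>
      |F x.2 (Dplus (pt x.1 x.2))| + |F x.2 (Dminus (pt x.1 x.2))| := by
    simp only [F, pt, dotP]; fun_prop
  obtain ⟨B, hB⟩ := ((isCompact_Icc (a := -1) (b := 1)).prod
    (isCompact_Icc (a := 0) (b := 2 * π))).exists_bound_of_continuousOn hcont.continuousOn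
  refine tendsto_intervalIntegral_neg_self_of_norm_le (B := B * |2 * π - 0|) fun h hh => ?_
  refine norm_integral_le_of_norm_le_const fun α hα => ?_
  have hα' : α ∈ Icc 0 (2 * π) := uIcc_of_le two_pi_pos.le ▸ uIoc_subset_uIcc hα
  calc ‖F α (Dfield Φ Dplus Dminus (pt h α))‖
      ≤ |F α (Dplus (pt h α))| + |F α (Dminus (pt h α))| := abs_comp_Dfield_le (F α) (pt h α)
    _ ≤ B := (le_abs_self _).trans (hB (h, α) ⟨hh, hα'⟩)

end Flux

theorem stmt_6_general (r₀ l₀ : ℝ) (hr₀ : 0 < r₀) (hl₀ : 0 < l₀)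
    (Φ : ℝ × ℝ → ℝ) (hΦ : ContDiff ℝ 2 Φ)
    (hΦ0 : Φ (0, 0) = 0) (hΦ1 : p1 Φ (0, 0) = 0) (hΦ2 : p2 Φ (0, 0) = 0)
    (Dplus Dminus : ℝ × ℝ × ℝ → ℝ × ℝ × ℝ)
    (hDp : ContDiff ℝ 1 Dplus) (hDm : ContDiff ℝ 1 Dminus)
    (W : ℝ → ℝ → ℝ)
    (hdiv : ∀ r ∈ Ioo (0:ℝ) r₀, ∀ l ∈ Ioo (0:ℝ) l₀,
      totalFlux Φ Dplus Dminus r l = W r l)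
    (ω : ℝ) (g : ℝ → ℝ)
    (hW1 : ∀ r ∈ Ioo (0:ℝ) r₀,
      Tendsto (fun l => W r l / (π * r ^ 2)) (𝓝[>] 0) (𝓝 (g r)))
    (hW2 : Tendsto g (𝓝[>] 0) (𝓝 ω)) :
    (Dplus (0, 0, 0)).2.1 - (Dminus (0, 0, 0)).2.1 = ω := by
  have hbases := tendsto_basesFlux_div (hΦ.of_le (by norm_num)) hΦ0 hΦ1 hΦ2
    hDp.continuous hDm.continuous
  have hslice : ∀ᶠ r in 𝓝[>] 0,
      Tendsto (fun l => basesFlux Φ Dplus Dminus r l / (π * r ^ 2)) (𝓝[>] 0) (𝓝 (g r)) := by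
    filter_upwards [Ioo_mem_nhdsGT hr₀] with r hr
    have hlat : Tendsto (fun l => lateralFlux Φ Dplus Dminus r l / (π * r ^ 2)) (𝓝[>] 0) (𝓝 0) := by
      simpa using ((tendsto_lateralFlux hΦ.continuous hDp.continuous hDm.continuous r).div_const
        (π * r ^ 2)).mono_left nhdsWithin_le_nhds
    refine (sub_zero (g r) ▸ (hW1 r hr).sub hlat).congr' ?_
    filter_upwards [Ioo_mem_nhdsGT hl₀] with l hl
    rw [← hdiv r hr l hl, totalFlux_eq hl.1]
    ring
  exact tendsto_nhds_unique (tendsto_of_tendsto_prod_of_eventually_tendsto hbases hslice) hW2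

/-- Jump condition for the normal component of D: if the divergence identity
∫_{∂C} D·n dA = ∫_C ρ_c dx holds for all small curved cylinders C and the
surface charge density ω = lim_{r→0} lim_{Δl→0} (1/(πr²))∫_C ρ_c dx exists,
then (D⁺(0) − D⁻(0))·n = ω with n = (0,1,0). -/
theorem stmt_6 (r₀ l₀ M C : ℝ) (hr₀ : 0 < r₀) (hl₀ : 0 < l₀) (hM : 0 < M) (hC : 0 < C)
    (Φ : ℝ × ℝ → ℝ) (hΦ : ContDiff ℝ 2 Φ)
    (hΦ0 : Φ (0, 0) = 0) (hΦ1 : p1 Φ (0, 0) = 0) (hΦ2 : p2 Φ (0, 0) = 0)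
    (hΦb : ∀ q, ‖fderiv ℝ Φ q‖ ≤ M ∧ ‖fderiv ℝ (fderiv ℝ Φ) q‖ ≤ M)
    (Dplus Dminus : ℝ × ℝ × ℝ → ℝ × ℝ × ℝ)
    (hDp : ContDiff ℝ 1 Dplus) (hDm : ContDiff ℝ 1 Dminus)
    (hDpb : ∀ p, ‖fderiv ℝ Dplus p‖ ≤ M) (hDmb : ∀ p, ‖fderiv ℝ Dminus p‖ ≤ M)
    (W : ℝ → ℝ → ℝ)
    (hWb : ∀ r ∈ Ioo (0:ℝ) r₀, ∀ l ∈ Ioo (0:ℝ) l₀, |W r l| ≤ C * r ^ 2 * l)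
    (hdiv : ∀ r ∈ Ioo (0:ℝ) r₀, ∀ l ∈ Ioo (0:ℝ) l₀,
      totalFlux Φ Dplus Dminus r l = W r l)
    (ω : ℝ) (g : ℝ → ℝ)
    (hW1 : ∀ r ∈ Ioo (0:ℝ) r₀,
      Tendsto (fun l => W r l / (π * r ^ 2)) (𝓝[>] 0) (𝓝 (g r)))
    (hW2 : Tendsto g (𝓝[>] 0) (𝓝 ω)) :
    (Dplus (0, 0, 0)).2.1 - (Dminus (0, 0, 0)).2.1 = ω :=
  stmt_6_general r₀ l₀ hr₀ hl₀ Φ hΦ hΦ0 hΦ1 hΦ2 Dplus Dminus hDp hDm W hdiv ω g hW1 hW2
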